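/- arXiv:0810.5217 — 2 statements merged into one kernel-verified Lean document; each statement's English description precedes it below -/
import Mathlib

section
/- Let ⟨⟨ℙ_η : η ≤ κ⁺⟩, ⟨σ_{st} : s ≺ t⟩, ⟨e_α : α < κ⟩⟩ be an FS system along a simplified (κ,1)-morass, and for p ∈ ℙ_{κ⁺} let p* : κ → V and supp(p) be defined as in the FS system construction. If p, q ∈ ℙ_{κ⁺} and p*(α) is compatible with q*(α) for α = max(supp(p) ∩ supp(q)), then p and q are compatible in ℙ_{κ⁺}. -/
open Ordinal Set

/-- A simplified `(κ,1)`-morass (Velleman).  Morass maps are coded as total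
functions `Ordinal → Ordinal`, constrained only on `Iio (θ α)`. -/
structure SimplifiedMorass (κ : Cardinal.{0}) where
  θ : Ordinal → Ordinal
  F : Ordinal → Ordinal → Set (Ordinal → Ordinal)
  fa : Ordinal → Ordinal → Ordinal
  theta_zero : θ 0 = 1
  theta_top : θ κ.ord = (Order.succ κ).ord
  theta_pos : ∀ α < κ.ord, 0 < θ α
  theta_lt : ∀ α < κ.ord, θ α < κ.ord
  F_mono : ∀ α β, ∀ f ∈ F α β, StrictMonoOn f (Set.Iio (θ α))
  F_maps : ∀ α β, ∀ f ∈ F α β, ∀ ξ < θ α, f ξ < θ β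
  P1 : ∀ α β, α < β → β < κ.ord → Cardinal.mk ↥(F α β) < Cardinal.lift.{1} κ
  P2a : ∀ α β γ, α < β → β < γ → γ ≤ κ.ord →
    ∀ h ∈ F α γ, ∃ f ∈ F β γ, ∃ g ∈ F α β, ∀ ξ < θ α, h ξ = f (g ξ)
  P2b : ∀ α β γ, α < β → β < γ → γ ≤ κ.ord →
    ∀ f ∈ F β γ, ∀ g ∈ F α β, ∃ h ∈ F α γ, ∀ ξ < θ α, h ξ = f (g ξ)
  P3a : ∀ α < κ.ord, fa α ∈ F α (α + 1)
  P3b : ∀ α < κ.ord, ∃ δ < θ α, (∀ ξ < δ, fa α ξ = ξ) ∧ θ α ≤ fa α δ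
  P3c : ∀ α < κ.ord, ∃ g ∈ F α (α + 1), ∀ ξ < θ α, g ξ = ξ
  P3d : ∀ α < κ.ord, ∀ g ∈ F α (α + 1),
    (∀ ξ < θ α, g ξ = ξ) ∨ (∀ ξ < θ α, g ξ = fa α ξ)
  P4 : ∀ α ≤ κ.ord, Order.IsSuccLimit α → ∀ β₁ β₂, β₁ < α → β₂ < α →
    ∀ f₁ ∈ F β₁ α, ∀ f₂ ∈ F β₂ α, ∃ γ, β₁ < γ ∧ β₂ < γ ∧ γ < α ∧
      ∃ g ∈ F γ α, ∃ h₁ ∈ F β₁ γ, ∃ h₂ ∈ F β₂ γ,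
        (∀ ξ < θ β₁, f₁ ξ = g (h₁ ξ)) ∧ (∀ ξ < θ β₂, f₂ ξ = g (h₂ ξ))
  P5 : ∀ α ≤ κ.ord, 0 < α → ∀ τ < θ α, ∃ β < α, ∃ f ∈ F β α, ∃ ξ < θ β, f ξ = τ

/-- The tree relation `s ≺ t` on the morass tree
`T = {⟨α,ν⟩ : α ≤ κ, ν < θ_α}`. -/
def Prec {κ : Cardinal} (M : SimplifiedMorass κ) (s t : Ordinal × Ordinal) : Prop :=
  s.1 < t.1 ∧ t.1 ≤ κ.ord ∧ s.2 < M.θ s.1 ∧ t.2 < M.θ t.1 ∧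
    ∃ f ∈ M.F s.1 t.1, f s.2 = t.2

/-- An FS system `⟨⟨ℙ_η : η ≤ κ⁺⟩, ⟨σ_{st} : s ≺ t⟩, ⟨e_α : α < κ⟩⟩` along a
simplified `(κ,1)`-morass `M` (Irrgang).  The partial orders `ℙ_η` are coded as
subsets `lev η` of a common ambient partial order `P` (so that
`ℙ_η ⊆_⊥ ℙ_ν` is meaningful), with `ℙ := ℙ_{κ⁺} = lev (θ κ)`. -/
structure FSSystem (κ : Cardinal.{0}) (M : SimplifiedMorass κ) (P : Type)
    [PartialOrder P] where
  lev : Ordinal → Set P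
  sig : Ordinal × Ordinal → Ordinal × Ordinal → P → P
  e : Ordinal → P → P
  -- (FS1)
  lev_mono : ∀ {η ν : Ordinal}, η ≤ ν → lev η ⊆ lev ν
  lev_bot : ∀ {η ν : Ordinal}, η ≤ ν → ∀ p ∈ lev η, ∀ q ∈ lev η,
      (∃ r ∈ lev ν, r ≤ p ∧ r ≤ q) → ∃ r ∈ lev η, r ≤ p ∧ r ≤ q
  lev_limit : ∀ {lam : Ordinal}, Order.IsSuccLimit lam → ∀ p ∈ lev lam, ∃ η < lam, p ∈ lev η
  -- (FS2)
  sig_maps : ∀ {s t}, Prec M s t →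
      Set.MapsTo (sig s t) (lev (s.2 + 1)) (lev (t.2 + 1))
  sig_mono : ∀ {s t}, Prec M s t → ∀ p ∈ lev (s.2 + 1), ∀ q ∈ lev (s.2 + 1),
      q ≤ p → sig s t q ≤ sig s t p
  sig_incomp : ∀ {s t}, Prec M s t → ∀ p ∈ lev (s.2 + 1), ∀ q ∈ lev (s.2 + 1),
      ((∃ r ∈ lev (s.2 + 1), r ≤ p ∧ r ≤ q) ↔
        (∃ r ∈ lev (t.2 + 1), r ≤ sig s t p ∧ r ≤ sig s t q))
  sig_inj : ∀ {s t}, Prec M s t → Set.InjOn (sig s t) (lev (s.2 + 1))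
  sig_comm : ∀ {s t u}, Prec M s t → Prec M t u → ∀ p ∈ lev (s.2 + 1),
      sig t u (sig s t p) = sig s u p
  sig_limit : ∀ {t : Ordinal × Ordinal}, Order.IsSuccLimit t.1 → t.1 ≤ κ.ord →
      t.2 < M.θ t.1 → ∀ p ∈ lev (t.2 + 1),
      ∃ s, Prec M s t ∧ ∃ q ∈ lev (s.2 + 1), sig s t q = p
  -- (FS4)
  sig_coh : ∀ {s t}, Prec M s t → ∀ f ∈ M.F s.1 t.1, f s.2 = t.2 →
      ∀ ν' ≤ s.2, ∀ p ∈ lev (ν' + 1), sig s t p = sig (s.1, ν') (t.1, f ν') p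
  -- (FS5)
  sig_id : ∀ {s t}, Prec M s t →
      (∃ f ∈ M.F s.1 t.1, f s.2 = t.2 ∧ ∀ ξ ≤ s.2, f ξ = ξ) →
      ∀ p ∈ lev (s.2 + 1), sig s t p = p
  -- (FS3)
  e_maps : ∀ α < κ.ord, Set.MapsTo (e α) (lev (M.θ (α + 1))) (lev (M.θ α))
  -- (FS6)(a): `e α p` is a reduction of `p` with respect to `id ↾ ℙ_{θ_α}`
  red_id : ∀ α < κ.ord, ∀ p ∈ lev (M.θ (α + 1)), ∀ q ∈ lev (M.θ α),
      q ≤ e α p → ∃ r ∈ lev (M.θ (α + 1)), r ≤ q ∧ r ≤ p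
  -- (FS6)(b): `e α p` is a reduction of `p` with respect to `σ_α = σ_{f_α}`
  red_sig : ∀ α < κ.ord, ∀ p ∈ lev (M.θ (α + 1)), ∀ q, ∀ ν < M.θ α,
      q ∈ lev (ν + 1) → q ≤ e α p →
      ∃ r ∈ lev (M.θ (α + 1)), r ≤ sig (α, ν) (α + 1, M.fa α ν) q ∧ r ≤ p
  -- (FS7)
  e_id : ∀ α < κ.ord, ∀ p ∈ lev (M.θ α), e α p = p
  e_sig : ∀ α < κ.ord, ∀ ν < M.θ α, ∀ p ∈ lev (ν + 1),
      e α (sig (α, ν) (α + 1, M.fa α ν) p) = p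

/-- `IsTrace S p pstar supp` says that `pstar : Ordinal → P` and
`supp ⊆ κ` are the trace function `p*` and the support `supp(p)` of
`p ∈ ℙ_{κ⁺}`, as computed by the recursion
`p₀ = p`, `ν_n(p) = min {η : p_n ∈ ℙ_{η+1}}`, `t_n(p) = ⟨κ, ν_n(p)⟩`,
`p⁽ⁿ⁾(α) = σ_{s t_n(p)}⁻¹(p_n)`, `γ_n(p) = min (dom p⁽ⁿ⁾)`,
`p_{n+1} = e_{γ_n(p)−1}(p⁽ⁿ⁾(γ_n(p)))`, stopping at stage `N` where
`γ_N(p) = 0`. -/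
def IsTrace {κ : Cardinal} {M : SimplifiedMorass κ} {P : Type} [PartialOrder P]
    (S : FSSystem κ M P) (p : P) (pstar : Ordinal → P) (supp : Set Ordinal) : Prop :=
  ∃ (N : ℕ) (pn : ℕ → P) (νn γn : ℕ → Ordinal)
    (sn : ℕ → Ordinal × Ordinal) (qn : ℕ → P),
    pn 0 = p ∧ γn N = 0 ∧ (∀ m < N, γn m ≠ 0) ∧
    supp = {α | ∃ m ≤ N, γn m = α} ∧
    (∀ n ≤ N,
      (pn n ∈ S.lev (νn n + 1) ∧ ∀ η < νn n, pn n ∉ S.lev (η + 1)) ∧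
      ((sn n).1 = γn n ∧ Prec M (sn n) (κ.ord, νn n) ∧
        qn n ∈ S.lev ((sn n).2 + 1) ∧ S.sig (sn n) (κ.ord, νn n) (qn n) = pn n) ∧
      (∀ s', Prec M s' (κ.ord, νn n) →
        (∃ q' ∈ S.lev (s'.2 + 1), S.sig s' (κ.ord, νn n) q' = pn n) →
        γn n ≤ s'.1) ∧
      (∀ β, γn n = β + 1 → n < N ∧ pn (n + 1) = S.e β (qn n))) ∧
    (∀ n ≤ N, ∀ α, γn n ≤ α → (∀ m < n, α < γn m) → α < κ.ord →
      ∃ s, s.1 = α ∧ Prec M s (κ.ord, νn n) ∧ pstar α ∈ S.lev (s.2 + 1) ∧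
        S.sig s (κ.ord, νn n) (pstar α) = pn n)

/-!
Starting at level `α`, climb the morass carrying a pair of compatible preimages of the current
stages `p_n`, `q_m` of the two traces. Between support points compatibility is transported
upwards along any two branch maps: at successor levels a map is the identity or `f_d` (P3d),
and `e_d` is a reduction in both senses (FS6); at limit levels the two branches are amalgamated
(P4). At a support point `γ_n = δ + 1` of one trace, rigidity of the morass maps (a map fixes
every point it sends below `θ` of its source) forces the preimage of
`p_{n+1} = e_δ(p⁽ⁿ⁾(γ_n))` at level `δ` to be `p_{n+1}` itself, and (FS6) lifts compatibility
to `p⁽ⁿ⁾(γ_n)`, a preimage of `p_n` at level `δ + 1`. The same rigidity shows that the supports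
strictly decrease. Above `α` the two supports are disjoint, so the support points can be crossed
one at a time, and at the top the preimages are `p` and `q` themselves.
-/

theorem le_apply_of_strictMonoOn {α : Type*} [LinearOrder α] [WellFoundedLT α] {t : α}
    {f : α → α} (hf : StrictMonoOn f (Iio t)) {ξ : α} (hξ : ξ < t) : ξ ≤ f ξ := by
  induction ξ using WellFoundedLT.induction with
  | _ ξ IH =>
    by_contra! h
    exact (IH (f ξ) h (h.trans hξ)).not_gt (hf (h.trans hξ) hξ h)

namespace SimplifiedMorass

variable {κ : Cardinal.{0}} (M : SimplifiedMorass κ)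

theorem theta_pos_of_le {b : Ordinal} (hb : b ≤ κ.ord) : 0 < M.θ b := by
  rcases hb.lt_or_eq with hb | rfl
  · exact M.theta_pos b hb
  · rw [M.theta_top, Cardinal.ord_pos]
    exact Order.bot_lt_succ κ

theorem F_nonempty {a b : Ordinal} (hab : a < b) (hb : b ≤ κ.ord) : (M.F a b).Nonempty := by
  induction b using WellFoundedLT.induction generalizing a with
  | _ b IH =>
    obtain ⟨β, hβb, f, hf, -⟩ := M.P5 b hb (pos_of_gt hab) 0 (M.theta_pos_of_le hb)
    rcases lt_trichotomy β a with hβa | rfl | haβ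
    · obtain ⟨g, hg, -⟩ := M.P2a β a b hβa hab hb f hf
      exact ⟨g, hg⟩
    · exact ⟨f, hf⟩
    · obtain ⟨g, hg⟩ := IH β hβb haβ (hβb.le.trans hb)
      obtain ⟨h, hh, -⟩ := M.P2b a β b haβ hβb hb f hf g hg
      exact ⟨h, hh⟩

theorem theta_mono {a b : Ordinal} (hab : a ≤ b) (hb : b ≤ κ.ord) : M.θ a ≤ M.θ b := by
  rcases hab.lt_or_eq with hab | rfl
  · obtain ⟨f, hf⟩ := M.F_nonempty hab hb
    by_contra! h
    exact (le_apply_of_strictMonoOn (M.F_mono a b f hf) h).not_gt (M.F_maps a b f hf _ h)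
  · rfl

theorem apply_eq_self_of_mem_F_succ {d η : Ordinal} (hd : d < κ.ord) {g : Ordinal → Ordinal}
    (hg : g ∈ M.F d (d + 1)) (hη : η < M.θ d) (hgη : g η < M.θ d) : g η = η := by
  rcases M.P3d d hd g hg with hid | hfa
  · exact hid η hη
  obtain ⟨δ, hδ, hfix, hjump⟩ := M.P3b d hd
  rw [hfa η hη] at hgη ⊢
  refine hfix η (lt_of_not_ge fun hδη => ?_)
  exact (hjump.trans ((M.F_mono d _ _ (M.P3a d hd)).monotoneOn hδ hη hδη)).not_gt hgη

theorem apply_eq_self_of_apply_lt_of_isSuccLimit {b : Ordinal} (hb : b ≤ κ.ord)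
    (hlim : Order.IsSuccLimit b)
    (IH : ∀ b' < b, ∀ a < b', ∀ f ∈ M.F a b', ∀ ξ < M.θ a, f ξ < M.θ a → f ξ = ξ) :
    ∀ a < b, ∀ f ∈ M.F a b, ∀ ξ < M.θ a, f ξ < M.θ a → f ξ = ξ := by
  suffices ∀ v, ∀ a < b, ∀ f ∈ M.F a b, ∀ ξ < M.θ a, f ξ = v → v < M.θ a → v = ξ from
    fun a hab f hf ξ hξ hfξ => this _ a hab f hf ξ hξ rfl hfξ
  intro v
  induction v using WellFoundedLT.induction with
  | _ v IHv =>
  intro a hab f hf ξ hξ hfξ hva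
  refine (hfξ ▸ le_apply_of_strictMonoOn (M.F_mono a b f hf) hξ).eq_or_lt.elim Eq.symm
    fun hξv => absurd ?_ hξv.ne'
  -- amalgamating `f` with a map hitting `ξ` yields a counterexample of smaller value `ξ`
  obtain ⟨β, hβ, f', hf', ξ', hξ', hf'ξ'⟩ :=
    M.P5 b hb hlim.pos ξ (hξ.trans_le (M.theta_mono hab.le hb))
  obtain ⟨γ, haγ, -, hγb, G, hG, h, hh, h', hh', hfG, hf'G⟩ :=
    M.P4 b hb hlim a β hab hβ f hf f' hf'
  have hGmono : ∀ {ζ}, ζ < M.θ γ → ζ ≤ G ζ := le_apply_of_strictMonoOn (M.F_mono γ b G hG)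
  have hGh : G (h ξ) = v := (hfG ξ hξ).symm.trans hfξ
  have hhξ : h ξ = ξ := IH γ hγb a haγ h hh ξ hξ
    ((hGmono (M.F_maps a γ h hh ξ hξ)).trans_lt (hGh ▸ hva))
  have hGξ : G ξ = v := hhξ ▸ hGh
  have hGc : G (h' ξ') = ξ := (hf'G ξ' hξ').symm.trans hf'ξ'
  have hc := M.F_maps β γ h' hh' ξ' hξ'
  have hcξ : h' ξ' < ξ := (hGc ▸ hGmono hc).lt_of_ne fun heq => by
    rw [heq, hGξ] at hGc
    exact hξv.ne' hGc
  exact absurd (IHv ξ hξv γ hγb G hG (h' ξ') hc hGc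
    (hξ.trans_le (M.theta_mono haγ.le (hγb.le.trans hb)))) hcξ.ne'

theorem apply_eq_self_of_apply_lt {b : Ordinal} (hb : b ≤ κ.ord) :
    ∀ a < b, ∀ f ∈ M.F a b, ∀ ξ < M.θ a, f ξ < M.θ a → f ξ = ξ := by
  induction b using WellFoundedLT.induction with
  | _ b IH =>
  rcases Ordinal.zero_or_succ_or_isSuccLimit b with rfl | ⟨d, rfl⟩ | hlim
  · exact fun a ha => absurd ha not_lt_zero
  · rw [Order.succ_eq_add_one] at hb ⊢
    have hd : d < κ.ord := (lt_add_one d).trans_le hb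
    intro a had f hf ξ hξ hfξ
    rcases (Order.lt_add_one_iff.1 had).lt_or_eq with had | rfl
    · obtain ⟨f₂, hf₂, g, hg, hfg⟩ := M.P2a a d (d + 1) had (lt_add_one d) hb f hf
      rw [hfg ξ hξ] at hfξ ⊢
      have hgξ : g ξ = ξ := IH d (Order.lt_succ d) hd.le a had g hg ξ hξ
        ((le_apply_of_strictMonoOn (M.F_mono d _ f₂ hf₂) (M.F_maps a d g hg ξ hξ)).trans_lt hfξ)
      rw [hgξ] at hfξ ⊢
      have hθ := M.theta_mono had.le hd.le
      exact M.apply_eq_self_of_mem_F_succ hd hf₂ (hξ.trans_le hθ) (hfξ.trans_le hθ)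
    · exact M.apply_eq_self_of_mem_F_succ hd hf hξ hfξ
  · exact M.apply_eq_self_of_apply_lt_of_isSuccLimit hb hlim
      fun b' hb' => IH b' hb' (hb'.le.trans hb)

theorem eqOn_of_apply_lt {a b ρ : Ordinal} (hb : b ≤ κ.ord) (hab : a < b)
    {f : Ordinal → Ordinal} (hf : f ∈ M.F a b) (hρ : ρ < M.θ a) (hfρ : f ρ < M.θ a) :
    ∀ ξ ≤ ρ, f ξ = ξ := by
  have hfix := M.apply_eq_self_of_apply_lt hb a hab f hf
  intro ξ hξρ
  have hξ := hξρ.trans_lt hρ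
  exact hfix ξ hξ (((M.F_mono a b f hf).monotoneOn hξ hρ hξρ).trans_lt hfρ)

theorem exists_mem_F_apply_eq_self {ζ τ ν : Ordinal} (hτ : τ ≤ κ.ord) (hζτ : ζ < τ)
    (hν : ν < M.θ ζ) : ∃ g ∈ M.F ζ τ, g ν = ν := by
  induction τ using WellFoundedLT.induction with
  | _ τ IH =>
  obtain ⟨β, hβτ, f, hf, ξ, hξ, hfξ⟩ :=
    M.P5 τ hτ (pos_of_gt hζτ) ν (hν.trans_le (M.theta_mono hζτ.le hτ))
  have hfix := M.apply_eq_self_of_apply_lt hτ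
  rcases lt_or_ge β ζ with hβζ | hζβ
  · obtain ⟨g, hg, h, hh, hfgh⟩ := M.P2a β ζ τ hβζ hζτ hτ f hf
    have hgh : g (h ξ) = ν := (hfgh ξ hξ).symm.trans hfξ
    have hhξ : h ξ = ν := (hfix ζ hζτ g hg (h ξ) (M.F_maps β ζ h hh ξ hξ) (hgh ▸ hν)).symm.trans hgh
    exact ⟨g, hg, hhξ ▸ hgh⟩
  · have hθ := M.theta_mono hζβ (hβτ.le.trans hτ)
    obtain rfl : ξ = ν := (hfix β hβτ f hf ξ hξ (hfξ ▸ hν.trans_le hθ)).symm.trans hfξ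
    rcases hζβ.lt_or_eq with hζβ | rfl
    · obtain ⟨g, hg, hgξ⟩ := IH β hβτ (hβτ.le.trans hτ) hζβ
      obtain ⟨k, hk, hkfg⟩ := M.P2b ζ β τ hζβ hβτ hτ f hf g hg
      exact ⟨k, hk, by rw [hkfg ξ hν, hgξ, hfξ]⟩
    · exact ⟨f, hf, hfξ⟩

end SimplifiedMorass

section Prec

variable {κ : Cardinal.{0}} {M : SimplifiedMorass κ}

theorem Prec.of_mem_F {a b ν : Ordinal} {f : Ordinal → Ordinal} (hab : a < b) (hb : b ≤ κ.ord)
    (hf : f ∈ M.F a b) (hν : ν < M.θ a) : Prec M (a, ν) (b, f ν) :=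
  ⟨hab, hb, hν, M.F_maps a b f hf ν hν, f, hf, rfl⟩

theorem Prec.trans {s u t : Ordinal × Ordinal} (h₁ : Prec M s u) (h₂ : Prec M u t) :
    Prec M s t := by
  obtain ⟨hsu, -, hs, -, g, hg, hgs⟩ := h₁
  obtain ⟨hut, ht, -, ht', f, hf, hfu⟩ := h₂
  obtain ⟨h, hh, hhfg⟩ := M.P2b s.1 u.1 t.1 hsu hut ht f hf g hg
  exact ⟨hsu.trans hut, ht, hs, ht', h, hh, by rw [hhfg s.2 hs, hgs, hfu]⟩

end Prec

namespace FSSystem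

variable {κ : Cardinal.{0}} {M : SimplifiedMorass κ} {P : Type} [PartialOrder P]
  {S : FSSystem κ M P}

variable (S) in
def Compat (η : Ordinal) (x y : P) : Prop :=
  ∃ r ∈ S.lev η, r ≤ x ∧ r ≤ y

theorem Compat.symm {η : Ordinal} {x y : P} (h : S.Compat η x y) : S.Compat η y x :=
  let ⟨r, hr, hrx, hry⟩ := h
  ⟨r, hr, hry, hrx⟩

theorem Compat.mono {η η' : Ordinal} (hη : η ≤ η') {x y : P} (h : S.Compat η x y) :
    S.Compat η' x y :=
  let ⟨r, hr, hrx, hry⟩ := h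
  ⟨r, S.lev_mono hη hr, hrx, hry⟩

theorem lev_succ_subset {η η' : Ordinal} (h : η < η') : S.lev (η + 1) ⊆ S.lev η' :=
  S.lev_mono (Order.add_one_le_of_lt h)

theorem exists_lt_of_mem_lev {h : Ordinal} (hpos : 0 < h) {x : P} (hx : x ∈ S.lev h) :
    ∃ η < h, x ∈ S.lev (η + 1) := by
  induction h using WellFoundedLT.induction with
  | _ h IH =>
  rcases Ordinal.zero_or_succ_or_isSuccLimit h with rfl | ⟨η, rfl⟩ | hlim
  · exact absurd hpos (lt_irrefl 0)
  · exact ⟨η, Order.lt_succ η, by rwa [← Order.succ_eq_add_one]⟩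
  · obtain ⟨h', hh', hx'⟩ := S.lev_limit hlim x hx
    rcases eq_zero_or_pos h' with rfl | hpos'
    · exact ⟨0, hpos, S.lev_mono zero_le hx'⟩
    · obtain ⟨η, hη, hxη⟩ := IH h' hh' hpos' hx'
      exact ⟨η, hη.trans hh', hxη⟩

theorem Compat.lev_max_succ {η ν₁ ν₂ : Ordinal} (hν₁ : ν₁ < η) (hν₂ : ν₂ < η) {x y : P}
    (hx : x ∈ S.lev (ν₁ + 1)) (hy : y ∈ S.lev (ν₂ + 1)) (h : S.Compat η x y) :
    S.Compat (max ν₁ ν₂ + 1) x y :=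
  S.lev_bot (Order.add_one_le_of_lt (max_lt hν₁ hν₂)) x
    (S.lev_mono (by gcongr; exact le_max_left _ _) hx) y
    (S.lev_mono (by gcongr; exact le_max_right _ _) hy) h

theorem sig_mem_lev_theta {s t : Ordinal × Ordinal} (h : Prec M s t) {x : P}
    (hx : x ∈ S.lev (s.2 + 1)) : S.sig s t x ∈ S.lev (M.θ t.1) :=
  S.lev_succ_subset h.2.2.2.1 (S.sig_maps h hx)

theorem sig_le_sig_of_mem_F {c τ μ ξ : Ordinal} {Φ : Ordinal → Ordinal} (hcτ : c < τ)
    (hτ : τ ≤ κ.ord) (hΦ : Φ ∈ M.F c τ) (hξ : ξ < M.θ c) (hμξ : μ ≤ ξ) {w y : P}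
    (hw : w ∈ S.lev (ξ + 1)) (hy : y ∈ S.lev (μ + 1)) (hwy : w ≤ y) :
    S.sig (c, ξ) (τ, Φ ξ) w ≤ S.sig (c, μ) (τ, Φ μ) y := by
  have hP := Prec.of_mem_F hcτ hτ hΦ hξ
  exact (S.sig_mono hP y (S.lev_mono (by gcongr) hy) w hw hwy).trans_eq
    (S.sig_coh hP Φ hΦ rfl μ hμξ y hy)

theorem Compat.sig_of_mem_F {c τ ν₁ ν₂ : Ordinal} {Φ : Ordinal → Ordinal} (hcτ : c < τ)
    (hτ : τ ≤ κ.ord) (hΦ : Φ ∈ M.F c τ) (hν₁ : ν₁ < M.θ c) (hν₂ : ν₂ < M.θ c) {x y : P}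
    (hx : x ∈ S.lev (ν₁ + 1)) (hy : y ∈ S.lev (ν₂ + 1)) (h : S.Compat (M.θ c) x y) :
    S.Compat (M.θ τ) (S.sig (c, ν₁) (τ, Φ ν₁) x) (S.sig (c, ν₂) (τ, Φ ν₂) y) := by
  obtain ⟨w, hw, hwx, hwy⟩ := h.lev_max_succ hν₁ hν₂ hx hy
  have hρ := max_lt hν₁ hν₂
  exact ⟨_, S.sig_mem_lev_theta (Prec.of_mem_F hcτ hτ hΦ hρ) hw,
    S.sig_le_sig_of_mem_F hcτ hτ hΦ hρ (le_max_left _ _) hw hx hwx,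
    S.sig_le_sig_of_mem_F hcτ hτ hΦ hρ (le_max_right _ _) hw hy hwy⟩

theorem Compat.of_e {δ : Ordinal} (hδ : δ < κ.ord) {y z : P} (hy : y ∈ S.lev (M.θ (δ + 1)))
    (h : S.Compat (M.θ δ) (S.e δ y) z) : S.Compat (M.θ (δ + 1)) y z := by
  obtain ⟨w, hw, hwy, hwz⟩ := h
  obtain ⟨r, hr, hrw, hry⟩ := S.red_id δ hδ y hy w hw hwy
  exact ⟨r, hr, hry, hrw.trans hwz⟩

theorem Compat.of_e_sig_fa {δ ν μ : Ordinal} (hδ : δ < κ.ord) (hν : ν < M.θ δ)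
    (hμ : μ < M.θ δ) {y z : P} (hy : y ∈ S.lev (M.θ (δ + 1))) (hey : S.e δ y ∈ S.lev (ν + 1))
    (hz : z ∈ S.lev (μ + 1)) (h : S.Compat (M.θ δ) (S.e δ y) z) :
    S.Compat (M.θ (δ + 1)) y (S.sig (δ, μ) (δ + 1, M.fa δ μ) z) := by
  obtain ⟨w, hw, hwy, hwz⟩ := h.lev_max_succ hν hμ hey hz
  obtain ⟨r, hr, hrw, hry⟩ := S.red_sig δ hδ y hy w _ (max_lt hν hμ) hw hwy
  exact ⟨r, hr, hry, hrw.trans (S.sig_le_sig_of_mem_F (lt_add_one δ)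
    (Order.add_one_le_of_lt hδ) (M.P3a δ hδ) (max_lt hν hμ) (le_max_right _ _) hw hz hwz)⟩

theorem sig_succ_eq_or {d ν : Ordinal} (hd : d < κ.ord) {g : Ordinal → Ordinal}
    (hg : g ∈ M.F d (d + 1)) (hν : ν < M.θ d) {x : P} (hx : x ∈ S.lev (ν + 1)) :
    S.sig (d, ν) (d + 1, g ν) x = x ∨
      S.sig (d, ν) (d + 1, g ν) x = S.sig (d, ν) (d + 1, M.fa d ν) x := by
  rcases M.P3d d hd g hg with hid | hfa
  · exact .inl <| S.sig_id (Prec.of_mem_F (lt_add_one d) (Order.add_one_le_of_lt hd) hg hν)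
      ⟨g, hg, rfl, fun ξ hξ => hid ξ (hξ.trans_lt hν)⟩ x hx
  · exact .inr <| by rw [hfa ν hν]

theorem Compat.sig_succ {d ν₁ ν₂ : Ordinal} (hd : d < κ.ord) {g₁ g₂ : Ordinal → Ordinal}
    (hg₁ : g₁ ∈ M.F d (d + 1)) (hg₂ : g₂ ∈ M.F d (d + 1)) (hν₁ : ν₁ < M.θ d)
    (hν₂ : ν₂ < M.θ d) {x y : P} (hx : x ∈ S.lev (ν₁ + 1)) (hy : y ∈ S.lev (ν₂ + 1))
    (h : S.Compat (M.θ d) x y) :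
    S.Compat (M.θ (d + 1)) (S.sig (d, ν₁) (d + 1, g₁ ν₁) x)
      (S.sig (d, ν₂) (d + 1, g₂ ν₂) y) := by
  have hd' := Order.add_one_le_of_lt hd
  have hfa {ν : Ordinal} (hν : ν < M.θ d) {z : P} (hz : z ∈ S.lev (ν + 1)) :=
    S.sig_mem_lev_theta (Prec.of_mem_F (lt_add_one d) hd' (M.P3a d hd) hν) hz
  rcases S.sig_succ_eq_or hd hg₁ hν₁ hx with h₁ | h₁ <;>
    rcases S.sig_succ_eq_or hd hg₂ hν₂ hy with h₂ | h₂ <;> rw [h₁, h₂]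
  · exact h.mono (M.theta_mono (lt_add_one d).le hd')
  · refine (Compat.of_e hd (hfa hν₂ hy) ?_).symm
    rw [S.e_sig d hd ν₂ hν₂ y hy]
    exact h.symm
  · refine Compat.of_e hd (hfa hν₁ hx) ?_
    rwa [S.e_sig d hd ν₁ hν₁ x hx]
  · exact h.sig_of_mem_F (lt_add_one d) hd' (M.P3a d hd) hν₁ hν₂ hx hy

theorem sig_sig_of_mem_F {a b c ν : Ordinal} {f g : Ordinal → Ordinal} (hab : a < b)
    (hbc : b < c) (hc : c ≤ κ.ord) (hf : f ∈ M.F a b) (hg : g ∈ M.F b c) (hν : ν < M.θ a)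
    {x : P} (hx : x ∈ S.lev (ν + 1)) :
    S.sig (b, f ν) (c, g (f ν)) (S.sig (a, ν) (b, f ν) x) = S.sig (a, ν) (c, g (f ν)) x :=
  S.sig_comm (Prec.of_mem_F hab (hbc.le.trans hc) hf hν)
    (Prec.of_mem_F hbc hc hg (M.F_maps a b f hf ν hν)) x hx

theorem sig_mem_of_mem_F {a b ν : Ordinal} {f : Ordinal → Ordinal} (hab : a < b)
    (hb : b ≤ κ.ord) (hf : f ∈ M.F a b) (hν : ν < M.θ a) {x : P} (hx : x ∈ S.lev (ν + 1)) :
    S.sig (a, ν) (b, f ν) x ∈ S.lev (f ν + 1) :=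
  S.sig_maps (Prec.of_mem_F hab hb hf hν) hx

theorem Compat.sig_of_mem_F₂ {c τ ν₁ ν₂ : Ordinal} (hcτ : c < τ) (hτ : τ ≤ κ.ord)
    {Φ₁ Φ₂ : Ordinal → Ordinal} (hΦ₁ : Φ₁ ∈ M.F c τ) (hΦ₂ : Φ₂ ∈ M.F c τ)
    (hν₁ : ν₁ < M.θ c) (hν₂ : ν₂ < M.θ c) {x y : P} (hx : x ∈ S.lev (ν₁ + 1))
    (hy : y ∈ S.lev (ν₂ + 1)) (h : S.Compat (M.θ c) x y) :
    S.Compat (M.θ τ) (S.sig (c, ν₁) (τ, Φ₁ ν₁) x) (S.sig (c, ν₂) (τ, Φ₂ ν₂) y) := by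
  induction τ using WellFoundedLT.induction generalizing Φ₁ Φ₂ with
  | _ τ IH =>
  rcases Ordinal.zero_or_succ_or_isSuccLimit τ with rfl | ⟨d, rfl⟩ | hlim
  · exact absurd hcτ not_lt_zero
  · rw [Order.succ_eq_add_one] at hτ hcτ hΦ₁ hΦ₂ ⊢
    have hd : d < κ.ord := (lt_add_one d).trans_le hτ
    rcases (Order.lt_add_one_iff.1 hcτ).lt_or_eq with hcd | rfl
    · obtain ⟨f₁, hf₁, g₁, hg₁, hΦg₁⟩ := M.P2a c d (d + 1) hcd (lt_add_one d) hτ Φ₁ hΦ₁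
      obtain ⟨f₂, hf₂, g₂, hg₂, hΦg₂⟩ := M.P2a c d (d + 1) hcd (lt_add_one d) hτ Φ₂ hΦ₂
      have := (IH d (Order.lt_succ d) hcd hd.le hg₁ hg₂).sig_succ hd hf₁ hf₂
        (M.F_maps c d g₁ hg₁ ν₁ hν₁) (M.F_maps c d g₂ hg₂ ν₂ hν₂)
        (sig_mem_of_mem_F hcd hd.le hg₁ hν₁ hx) (sig_mem_of_mem_F hcd hd.le hg₂ hν₂ hy)
      rwa [sig_sig_of_mem_F hcd (lt_add_one d) hτ hg₁ hf₁ hν₁ hx,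
        sig_sig_of_mem_F hcd (lt_add_one d) hτ hg₂ hf₂ hν₂ hy, ← hΦg₁ ν₁ hν₁,
        ← hΦg₂ ν₂ hν₂] at this
    · exact h.sig_succ hd hΦ₁ hΦ₂ hν₁ hν₂ hx hy
  · obtain ⟨γ, hcγ, -, hγτ, G, hG, h₁, hh₁, h₂, hh₂, hΦh₁, hΦh₂⟩ :=
      M.P4 τ hτ hlim c c hcτ hcτ Φ₁ hΦ₁ Φ₂ hΦ₂
    have hγ := hγτ.le.trans hτ
    have := (IH γ hγτ hcγ hγ hh₁ hh₂).sig_of_mem_F hγτ hτ hG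
      (M.F_maps c γ h₁ hh₁ ν₁ hν₁) (M.F_maps c γ h₂ hh₂ ν₂ hν₂)
      (sig_mem_of_mem_F hcγ hγ hh₁ hν₁ hx) (sig_mem_of_mem_F hcγ hγ hh₂ hν₂ hy)
    rwa [sig_sig_of_mem_F hcγ hγτ hτ hh₁ hG hν₁ hx, sig_sig_of_mem_F hcγ hγτ hτ hh₂ hG hν₂ hy,
      ← hΦh₁ ν₁ hν₁, ← hΦh₂ ν₂ hν₂] at this

variable (S) in
structure IsPreimage (s t : Ordinal × Ordinal) (y x : P) : Prop where
  prec : Prec M s t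
  mem : y ∈ S.lev (s.2 + 1)
  sig_eq : S.sig s t y = x

variable (S) in
def HasCompatPreimages (c τ ν₁ : Ordinal) (x : P) (ν₂ : Ordinal) (z : P) : Prop :=
  ∃ ρ₁ y₁ ρ₂ y₂, S.IsPreimage (c, ρ₁) (τ, ν₁) y₁ x ∧ S.IsPreimage (c, ρ₂) (τ, ν₂) y₂ z ∧
    S.Compat (M.θ c) y₁ y₂

theorem IsPreimage.trans {s u t : Ordinal × Ordinal} {y y' x : P}
    (h₁ : S.IsPreimage s u y y') (h₂ : S.IsPreimage u t y' x) : S.IsPreimage s t y x :=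
  ⟨h₁.prec.trans h₂.prec, h₁.mem, by
    rw [← S.sig_comm h₁.prec h₂.prec y h₁.mem, h₁.sig_eq, h₂.sig_eq]⟩

theorem IsPreimage.factor {c c' ρ : Ordinal} {t : Ordinal × Ordinal} {y x : P}
    (h : S.IsPreimage (c, ρ) t y x) (hcc' : c < c') (hc't : c' < t.1) :
    ∃ Φ ∈ M.F c c', S.IsPreimage (c', Φ ρ) t (S.sig (c, ρ) (c', Φ ρ) y) x := by
  obtain ⟨⟨-, ht, hρ, ht', Ψ, hΨ, hΨρ⟩, hy, hyx⟩ := h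
  obtain ⟨F, hF, Φ, hΦ, hΨΦ⟩ := M.P2a c c' t.1 hcc' hc't ht Ψ hΨ
  have hP := Prec.of_mem_F hcc' (hc't.le.trans ht) hΦ hρ
  have hP' : Prec M (c', Φ ρ) t :=
    ⟨hc't, ht, M.F_maps c c' Φ hΦ ρ hρ, ht', F, hF, (hΨΦ ρ hρ).symm.trans hΨρ⟩
  exact ⟨Φ, hΦ, hP', S.sig_maps hP hy, by rw [S.sig_comm hP hP' y hy, hyx]⟩

theorem IsPreimage.eq_of_lt_theta {c ρ b ν : Ordinal} {y x : P}
    (h : S.IsPreimage (c, ρ) (b, ν) y x) (hν : ν < M.θ c) : ρ = ν ∧ y = x := by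
  obtain ⟨hP, hy, hyx⟩ := h
  obtain ⟨Φ, hΦ, hΦρ⟩ := hP.2.2.2.2
  have hcb : c < b := hP.1
  have hb : b ≤ κ.ord := hP.2.1
  have hρ : ρ < M.θ c := hP.2.2.1
  have hΦρ' : Φ ρ < M.θ c := hΦρ ▸ hν
  refine ⟨(M.apply_eq_self_of_apply_lt hb c hcb Φ hΦ ρ hρ hΦρ').symm.trans hΦρ, ?_⟩
  rw [← hyx, S.sig_id hP ⟨Φ, hΦ, hΦρ, M.eqOn_of_apply_lt hb hcb hΦ hρ hΦρ'⟩ y hy]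

theorem isPreimage_self {ζ τ ν : Ordinal} (hζτ : ζ < τ) (hτ : τ ≤ κ.ord) (hν : ν < M.θ ζ)
    {x : P} (hx : x ∈ S.lev (ν + 1)) : S.IsPreimage (ζ, ν) (τ, ν) x x := by
  obtain ⟨g, hg, hgν⟩ := M.exists_mem_F_apply_eq_self hτ hζτ hν
  have hP : Prec M (ζ, ν) (τ, ν) := by
    have := Prec.of_mem_F hζτ hτ hg hν
    rwa [hgν] at this
  have hfix := M.eqOn_of_apply_lt hτ hζτ hg hν (by rwa [hgν])
  exact ⟨hP, hx, S.sig_id hP ⟨g, hg, hgν, hfix⟩ x hx⟩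

namespace HasCompatPreimages

variable {c τ ν₁ ν₂ : Ordinal} {x z : P}

theorem symm (h : S.HasCompatPreimages c τ ν₁ x ν₂ z) : S.HasCompatPreimages c τ ν₂ z ν₁ x :=
  let ⟨ρ₁, y₁, ρ₂, y₂, h₁, h₂, hc⟩ := h
  ⟨ρ₂, y₂, ρ₁, y₁, h₂, h₁, hc.symm⟩

theorem compat (h : S.HasCompatPreimages c τ ν₁ x ν₂ z) : S.Compat (M.θ τ) x z := by
  obtain ⟨ρ₁, y₁, ρ₂, y₂, ⟨hP₁, hy₁, rfl⟩, ⟨hP₂, hy₂, rfl⟩, hc⟩ := h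
  obtain ⟨hcτ, hτ, hρ₁, -, Φ₁, hΦ₁, rfl⟩ := hP₁
  obtain ⟨-, -, hρ₂, -, Φ₂, hΦ₂, rfl⟩ := hP₂
  exact hc.sig_of_mem_F₂ hcτ hτ hΦ₁ hΦ₂ hρ₁ hρ₂ hy₁ hy₂

theorem mono {c' : Ordinal} (h : S.HasCompatPreimages c τ ν₁ x ν₂ z) (hcc' : c ≤ c')
    (hc'τ : c' < τ) : S.HasCompatPreimages c' τ ν₁ x ν₂ z := by
  rcases hcc'.lt_or_eq with hcc' | rfl
  · obtain ⟨ρ₁, y₁, ρ₂, y₂, h₁, h₂, hc⟩ := h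
    obtain ⟨Φ₁, hΦ₁, h₁'⟩ := h₁.factor hcc' hc'τ
    obtain ⟨Φ₂, hΦ₂, h₂'⟩ := h₂.factor hcc' hc'τ
    exact ⟨_, _, _, _, h₁', h₂', hc.sig_of_mem_F₂ hcc' (hc'τ.le.trans h₁.prec.2.1) hΦ₁ hΦ₂
      h₁.prec.2.2.1 h₂.prec.2.2.1 h₁.mem h₂.mem⟩
  · exact h

theorem of_e {δ ρ ν ν' : Ordinal} {y : P} (hy : S.IsPreimage (δ + 1, ρ) (κ.ord, ν) y x)
    (hν' : ν' < M.θ δ) (hcδ : c ≤ δ)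
    (h : S.HasCompatPreimages c κ.ord ν' (S.e δ y) ν₂ z) :
    S.HasCompatPreimages (δ + 1) κ.ord ν x ν₂ z := by
  have hδκ : δ + 1 < κ.ord := hy.prec.1
  have hδ : δ < κ.ord := (lt_add_one δ).trans hδκ
  obtain ⟨ρ₁, y₁, μ, w, h₁, hw, hc⟩ := h.mono hcδ hδ
  obtain ⟨rfl, rfl⟩ := h₁.eq_of_lt_theta hν'
  obtain ⟨H, hH, hw'⟩ := hw.factor (lt_add_one δ) hδκ
  have hyθ : y ∈ S.lev (M.θ (δ + 1)) := S.lev_succ_subset hy.prec.2.2.1 hy.mem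
  refine ⟨ρ, y, H μ, _, hy, hw', ?_⟩
  have hμ : μ < M.θ δ := hw.prec.2.2.1
  rcases S.sig_succ_eq_or hδ hH hμ hw.mem with hid | hfa
  · rw [hid]
    exact hc.of_e hδ hyθ
  · rw [hfa]
    exact hc.of_e_sig_fa hδ hν' hμ hyθ h₁.mem hw.mem

end HasCompatPreimages

variable (S) in
/-- The stages `n ≤ N` of the recursion defining `p*`: `p n = p_n` sits at the node
`(κ, ν n)`, and `q n = p⁽ⁿ⁾(γ_n(p))` is its preimage at the node `(γ n, ρ n)`. -/
structure TraceChain where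
  N : ℕ
  p : ℕ → P
  ν : ℕ → Ordinal
  γ : ℕ → Ordinal
  ρ : ℕ → Ordinal
  q : ℕ → P
  γ_ne_zero : ∀ n < N, γ n ≠ 0
  p_mem : ∀ n ≤ N, p n ∈ S.lev (ν n + 1)
  p_not_mem : ∀ n ≤ N, ∀ η < ν n, p n ∉ S.lev (η + 1)
  isPreimage : ∀ n ≤ N, S.IsPreimage (γ n, ρ n) (κ.ord, ν n) (q n) (p n)
  γ_le : ∀ n ≤ N, ∀ s y, S.IsPreimage s (κ.ord, ν n) y (p n) → γ n ≤ s.1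
  p_succ : ∀ n < N, ∀ β, γ n = β + 1 → p (n + 1) = S.e β (q n)

namespace TraceChain

variable (T : S.TraceChain) {n : ℕ}

theorem exists_γ_eq_add_one (hn : n < T.N) : ∃ δ, T.γ n = δ + 1 := by
  obtain ⟨hP, hq, -⟩ := T.isPreimage n hn.le
  rcases Ordinal.zero_or_succ_or_isSuccLimit (T.γ n) with h0 | ⟨δ, hδ⟩ | hlim
  · exact absurd h0 (T.γ_ne_zero n hn)
  · exact ⟨δ, hδ ▸ Order.succ_eq_add_one δ⟩
  · obtain ⟨s, hs, y, hy, hsy⟩ :=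
      S.sig_limit (t := (T.γ n, T.ρ n)) hlim hP.1.le hP.2.2.1 (T.q n) hq
    have := T.γ_le n hn.le s y (IsPreimage.trans ⟨hs, hy, hsy⟩ (T.isPreimage n hn.le))
    exact absurd hs.1 this.not_gt

theorem ν_succ_lt {δ : Ordinal} (hn : n < T.N) (hδ : T.γ n = δ + 1) : T.ν (n + 1) < M.θ δ := by
  obtain ⟨hP, hq, -⟩ := T.isPreimage n hn.le
  have hδκ : δ < κ.ord := (lt_add_one δ).trans (hδ ▸ hP.1)
  have hqθ : T.q n ∈ S.lev (M.θ (δ + 1)) := S.lev_succ_subset (hδ ▸ hP.2.2.1) hq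
  have hp : T.p (n + 1) ∈ S.lev (M.θ δ) := T.p_succ n hn δ hδ ▸ S.e_maps δ hδκ hqθ
  obtain ⟨η, hη, hpη⟩ := S.exists_lt_of_mem_lev (M.theta_pos δ hδκ) hp
  exact lt_of_not_ge fun h => T.p_not_mem (n + 1) hn η (hη.trans_le h) hpη

theorem γ_succ_lt (hn : n < T.N) : T.γ (n + 1) < T.γ n := by
  obtain ⟨δ, hδ⟩ := T.exists_γ_eq_add_one hn
  have hδκ : δ < κ.ord := (lt_add_one δ).trans (hδ ▸ (T.isPreimage n hn.le).prec.1)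
  have := T.γ_le (n + 1) hn _ _
    (isPreimage_self hδκ le_rfl (T.ν_succ_lt hn hδ) (T.p_mem (n + 1) hn))
  exact hδ ▸ this.trans_lt (lt_add_one δ)

theorem strictAntiOn_γ : StrictAntiOn T.γ (Iic T.N) :=
  strictAntiOn_Iic_of_succ_lt fun _ hn => T.γ_succ_lt hn

theorem hasCompatPreimages_of_succ {c δ ν : Ordinal} {z : P} (hn : n < T.N)
    (hδ : T.γ n = δ + 1) (hcδ : c ≤ δ)
    (h : S.HasCompatPreimages c κ.ord (T.ν (n + 1)) (T.p (n + 1)) ν z) :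
    S.HasCompatPreimages (δ + 1) κ.ord (T.ν n) (T.p n) ν z := by
  have hP := T.isPreimage n hn.le
  rw [hδ] at hP
  exact HasCompatPreimages.of_e hP (T.ν_succ_lt hn hδ) hcδ (T.p_succ n hn δ hδ ▸ h)

structure Ascent (T T' : S.TraceChain) (α c : Ordinal) (n m : ℕ) : Prop where
  disjoint : ∀ i ≤ T.N, ∀ i' ≤ T'.N, T.γ i = T'.γ i' → T.γ i ≤ α
  le_N : n ≤ T.N
  le_N' : m ≤ T'.N
  le_c : α ≤ c
  lt_γ : ∀ i < n, c < T.γ i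
  lt_γ' : ∀ i < m, c < T'.γ i
  hasCompatPreimages : S.HasCompatPreimages c κ.ord (T.ν n) (T.p n) (T'.ν m) (T'.p m)

variable {T} {T' : S.TraceChain} {α c : Ordinal} {m : ℕ}

theorem Ascent.symm (h : T.Ascent T' α c n m) : T'.Ascent T α c m n where
  disjoint i' hi' i hi he := he ▸ h.disjoint i hi i' hi' he.symm
  le_N := h.le_N'
  le_N' := h.le_N
  le_c := h.le_c
  lt_γ := h.lt_γ'
  lt_γ' := h.lt_γ
  hasCompatPreimages := h.hasCompatPreimages.symm

theorem Ascent.cross {j : ℕ} (h : T.Ascent T' α c (j + 1) m)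
    (hlt : ∀ i < m, T.γ j < T'.γ i) : T.Ascent T' α (T.γ j) j m := by
  have hj : j < T.N := h.le_N
  obtain ⟨δ, hδ⟩ := T.exists_γ_eq_add_one hj
  have hcj := h.lt_γ j (lt_add_one j)
  refine ⟨h.disjoint, hj.le, h.le_N', h.le_c.trans hcj.le,
    fun i hi => T.strictAntiOn_γ (hi.trans hj).le hj.le hi, hlt, ?_⟩
  rw [hδ] at hcj ⊢
  exact T.hasCompatPreimages_of_succ hj hδ (Order.lt_add_one_iff.1 hcj) h.hasCompatPreimages

theorem Ascent.compat (h : T.Ascent T' α c n m) : S.Compat (M.θ κ.ord) (T.p 0) (T'.p 0) := by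
  induction hk : n + m using Nat.strong_induction_on generalizing T T' c n m with
  | _ k IH =>
  subst hk
  rcases n with _ | j <;> rcases m with _ | j'
  · exact h.hasCompatPreimages.compat
  · exact (IH _ (by omega) (h.symm.cross fun i hi => absurd hi (Nat.not_lt_zero i)) rfl).symm
  · exact IH _ (by omega) (h.cross fun i hi => absurd hi (Nat.not_lt_zero i)) rfl
  · rcases lt_trichotomy (T.γ j) (T'.γ j') with hlt | heq | hgt
    · refine IH _ (by omega) (h.cross fun i hi => hlt.trans_le ?_) rfl
      have hj' := Nat.le_of_succ_le h.le_N'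
      have hij' := Nat.lt_succ_iff.1 hi
      exact T'.strictAntiOn_γ.antitoneOn (hij'.trans hj') hj' hij'
    · exact absurd (h.disjoint j (Nat.le_of_succ_le h.le_N) j' (Nat.le_of_succ_le h.le_N') heq)
        (h.le_c.trans_lt (h.lt_γ j (lt_add_one j))).not_ge
    · refine (IH _ (by omega) (h.symm.cross fun i hi => hgt.trans_le ?_) rfl).symm
      have hj := Nat.le_of_succ_le h.le_N
      have hij := Nat.lt_succ_iff.1 hi
      exact T.strictAntiOn_γ.antitoneOn (hij.trans hj) hj hij

end TraceChain

theorem _root_.IsTrace.exists_traceChain {p : P} {pstar : Ordinal → P} {supp : Set Ordinal}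
    (h : IsTrace S p pstar supp) :
    ∃ T : S.TraceChain, T.p 0 = p ∧ supp = {β | ∃ m ≤ T.N, T.γ m = β} ∧
      ∀ k ≤ T.N, ∃ ρ, S.IsPreimage (T.γ k, ρ) (κ.ord, T.ν k) (pstar (T.γ k)) (T.p k) := by
  obtain ⟨N, pn, νn, γn, sn, qn, h0, -, hne, hsupp, hstage, hstar⟩ := h
  let T : S.TraceChain :=
    { N, p := pn, ν := νn, γ := γn, ρ := fun n => (sn n).2, q := qn
      γ_ne_zero := hne
      p_mem := fun n hn => (hstage n hn).1.1
      p_not_mem := fun n hn => (hstage n hn).1.2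
      isPreimage := fun n hn => by
        obtain ⟨hs, hP, hq, hsig⟩ := (hstage n hn).2.1
        rw [← hs]
        exact ⟨hP, hq, hsig⟩
      γ_le := fun n hn s y hy => (hstage n hn).2.2.1 s hy.prec ⟨y, hy.mem, hy.sig_eq⟩
      p_succ := fun n hn β hβ => ((hstage n hn.le).2.2.2 β hβ).2 }
  refine ⟨T, h0, hsupp, fun k hk => ?_⟩
  obtain ⟨⟨a, ρ⟩, rfl, hP, hmem, hsig⟩ := hstar k hk (γn k) le_rfl
    (fun m hm => T.strictAntiOn_γ (hm.le.trans hk) hk hm) (T.isPreimage k hk).prec.1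
  exact ⟨ρ, hP, hmem, hsig⟩

end FSSystem

theorem fs_compatible_general {κ : Cardinal}
    (M : SimplifiedMorass κ) {P : Type} [PartialOrder P]
    (S : FSSystem κ M P) (p q : P)
    (pstar qstar : Ordinal → P) (sp sq : Set Ordinal)
    (htp : IsTrace S p pstar sp) (htq : IsTrace S q qstar sq)
    (α : Ordinal) (hmem : α ∈ sp ∩ sq) (hmax : ∀ β ∈ sp ∩ sq, β ≤ α)
    (hcompat : ∃ r ∈ S.lev (M.θ α), r ≤ pstar α ∧ r ≤ qstar α) :
    ∃ r ∈ S.lev (M.θ κ.ord), r ≤ p ∧ r ≤ q := by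
  obtain ⟨T, rfl, rfl, hpstar⟩ := htp.exists_traceChain
  obtain ⟨T', rfl, rfl, hqstar⟩ := htq.exists_traceChain
  obtain ⟨⟨k, hk, rfl⟩, ⟨k', hk', hkk'⟩⟩ := hmem
  obtain ⟨ρ, hρ⟩ := hpstar k hk
  obtain ⟨ρ', hρ'⟩ := hqstar k' hk'
  rw [hkk'] at hρ'
  exact FSSystem.TraceChain.Ascent.compat
    { disjoint := fun i hi i' hi' he => hmax _ ⟨⟨i, hi, rfl⟩, ⟨i', hi', he.symm⟩⟩
      le_N := hk
      le_N' := hk'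
      le_c := le_rfl
      lt_γ := fun i hi => T.strictAntiOn_γ (hi.le.trans hk) hk hi
      lt_γ' := fun i hi => hkk' ▸ T'.strictAntiOn_γ (hi.le.trans hk') hk' hi
      hasCompatPreimages := ⟨ρ, _, ρ', _, hρ, hρ', hcompat⟩ }

/-- Lemma 4.1: if `p*(α)` and `q*(α)` are compatible (in `ℙ_{θ_α}`) for
`α = max (supp(p) ∩ supp(q))`, then `p` and `q` are compatible in `ℙ_{κ⁺}`. -/
theorem fs_compatible {κ : Cardinal} (hreg : κ.IsRegular)
    (M : SimplifiedMorass κ) {P : Type} [PartialOrder P]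
    (S : FSSystem κ M P) (p q : P)
    (hp : p ∈ S.lev (M.θ κ.ord)) (hq : q ∈ S.lev (M.θ κ.ord))
    (pstar qstar : Ordinal → P) (sp sq : Set Ordinal)
    (htp : IsTrace S p pstar sp) (htq : IsTrace S q qstar sq)
    (α : Ordinal) (hmem : α ∈ sp ∩ sq) (hmax : ∀ β ∈ sp ∩ sq, β ≤ α)
    (hcompat : ∃ r ∈ S.lev (M.θ α), r ≤ pstar α ∧ r ≤ qstar α) :
    ∃ r ∈ S.lev (M.θ κ.ord), r ≤ p ∧ r ≤ q :=
  fs_compatible_general M S p q pstar qstar sp sq htp htq α hmem hmax hcompat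
end

section
/- Let π : θ̄ → θ be an order-preserving injection and let π : P(θ̄) → P(θ) be the induced map on Tennenbaum conditions, ⟨x_p, <_p⟩ ↦ ⟨π[x_p], π[<_p]⟩. Then the induced map is an injective embedding of partial orders: it is order-preserving, and p, p' ∈ P(θ̄) are incompatible iff π(p), π(p') are incompatible in P(θ). -/
open Ordinal

/-- Tennenbaum's forcing `P(θ)`: finite trees `p = ⟨x_p, <_p⟩` with
`x_p ⊆ θ` finite and `<_p` a tree order contained in the ordinal order. -/
structure TCond (θ : Ordinal) where
  x : Finset Ordinal
  lt : Ordinal → Ordinal → Prop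
  mem_lt : ∀ a ∈ x, a < θ
  lt_mem : ∀ a b, lt a b → a ∈ x ∧ b ∈ x
  lt_ord : ∀ a b, lt a b → a < b
  lt_trans : ∀ a b c, lt a b → lt b c → lt a c
  lt_tree : ∀ a b c, lt a c → lt b c → a = b ∨ lt a b ∨ lt b a

/-- `TExt p q`: the condition `p` extends `q`, i.e. `p ≤ q` in `P(θ)`:
`x_p ⊇ x_q` and `<_q = <_p ∩ x_q²`. -/
def TExt {θ : Ordinal} (p q : TCond θ) : Prop :=
  q.x ⊆ p.x ∧ ∀ a b, q.lt a b ↔ (p.lt a b ∧ a ∈ q.x ∧ b ∈ q.x)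

/-- Incompatibility in `P(θ)`: no common extension. -/
def TIncomp {θ : Ordinal} (p q : TCond θ) : Prop :=
  ¬∃ r : TCond θ, TExt r p ∧ TExt r q

/-- `TImage π p P` says that `P = π(p)` is the image of the condition `p`
under the induced action of `π` on conditions. -/
def TImage {θ θbar : Ordinal} (π : Ordinal → Ordinal)
    (p : TCond θbar) (P : TCond θ) : Prop :=
  (∀ b, b ∈ P.x ↔ ∃ a ∈ p.x, π a = b) ∧
  (∀ b b', P.lt b b' ↔ ∃ a a', p.lt a a' ∧ π a = b ∧ π a' = b')

/-!
An order-preserving `π` is an order isomorphism from `θ̄` onto its image, so a condition of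
`P(θ̄)` and its image carry the same tree, and extension is preserved and reflected. The one
point with content is that incompatibility is reflected: a common extension `R` of `π(p)` and
`π(q)` need not live on `π[θ̄]`, but pulling back `R` along `π` on the finite set `x_p ∪ x_q`
gives a common extension of `p` and `q`.
-/

open Set

namespace TCond

variable {θ θbar : Ordinal}

protected theorem ext {p q : TCond θ} (hx : p.x = q.x) (hlt : p.lt = q.lt) : p = q := by
  cases p; cases q; cases hx; cases hlt; rfl

theorem tExt_iff_forall_mem {p q : TCond θ} :
    TExt p q ↔ q.x ⊆ p.x ∧ ∀ a ∈ q.x, ∀ b ∈ q.x, (q.lt a b ↔ p.lt a b) := by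
  refine and_congr_right fun _ => ⟨fun h a ha b hb => ?_, fun h a b => ?_⟩
  · exact ⟨fun hab => ((h a b).1 hab).1, fun hab => (h a b).2 ⟨hab, ha, hb⟩⟩
  · constructor
    · intro hab
      obtain ⟨ha, hb⟩ := q.lt_mem a b hab
      exact ⟨(h a ha b hb).1 hab, ha, hb⟩
    · rintro ⟨hab, ha, hb⟩
      exact (h a ha b hb).2 hab

theorem TExt.refl (p : TCond θ) : TExt p p :=
  tExt_iff_forall_mem.2 ⟨subset_rfl, fun _ _ _ _ => Iff.rfl⟩

theorem TExt.antisymm {p q : TCond θ} (hpq : TExt p q) (hqp : TExt q p) : p = q :=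
  TCond.ext (hqp.1.antisymm hpq.1) <| by
    funext a b
    exact propext ⟨fun h => ((hqp.2 a b).1 h).1, fun h => ((hpq.2 a b).1 h).1⟩

noncomputable def map (π : Ordinal → Ordinal) (hmono : StrictMonoOn π (Iio θbar))
    (hmaps : ∀ ξ < θbar, π ξ < θ) (p : TCond θbar) : TCond θ where
  x := p.x.image π
  lt b b' := ∃ a a', p.lt a a' ∧ π a = b ∧ π a' = b'
  mem_lt := by
    simp only [Finset.mem_image]
    rintro _ ⟨a, ha, rfl⟩
    exact hmaps a (p.mem_lt a ha)
  lt_mem := by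
    rintro _ _ ⟨a, a', h, rfl, rfl⟩
    exact ⟨Finset.mem_image_of_mem π (p.lt_mem a a' h).1,
      Finset.mem_image_of_mem π (p.lt_mem a a' h).2⟩
  lt_ord := by
    rintro _ _ ⟨a, a', h, rfl, rfl⟩
    exact hmono (p.mem_lt a (p.lt_mem a a' h).1) (p.mem_lt a' (p.lt_mem a a' h).2)
      (p.lt_ord a a' h)
  lt_trans := by
    rintro _ _ _ ⟨a, a', h, rfl, rfl⟩ ⟨c, c', h', hc, rfl⟩
    obtain rfl : c = a' := hmono.injOn (p.mem_lt c (p.lt_mem c c' h').1)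
      (p.mem_lt a' (p.lt_mem a a' h).2) hc
    exact ⟨a, c', p.lt_trans a c c' h h', rfl, rfl⟩
  lt_tree := by
    rintro _ _ _ ⟨a, a', h, rfl, rfl⟩ ⟨c, c', h', rfl, hc'⟩
    obtain rfl : c' = a' := hmono.injOn (p.mem_lt c' (p.lt_mem c c' h').2)
      (p.mem_lt a' (p.lt_mem a a' h).2) hc'
    exact (p.lt_tree a c c' h h').imp (congrArg π)
      (Or.imp (fun hac => ⟨a, c, hac, rfl, rfl⟩) fun hca => ⟨c, a, hca, rfl, rfl⟩)

theorem tImage_map (π : Ordinal → Ordinal) (hmono : StrictMonoOn π (Iio θbar))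
    (hmaps : ∀ ξ < θbar, π ξ < θ) (p : TCond θbar) : TImage π p (p.map π hmono hmaps) :=
  ⟨fun _ => Finset.mem_image, fun _ _ => Iff.rfl⟩

def comap (π : Ordinal → Ordinal) (hmono : StrictMonoOn π (Iio θbar)) (R : TCond θ)
    (s : Finset Ordinal) (hs : ∀ a ∈ s, a < θbar) : TCond θbar where
  x := s
  lt a b := a ∈ s ∧ b ∈ s ∧ R.lt (π a) (π b)
  mem_lt := hs
  lt_mem _ _ h := ⟨h.1, h.2.1⟩
  lt_ord a b h := (hmono.lt_iff_lt (hs a h.1) (hs b h.2.1)).1 (R.lt_ord _ _ h.2.2)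
  lt_trans _ _ _ h h' := ⟨h.1, h'.2.1, R.lt_trans _ _ _ h.2.2 h'.2.2⟩
  lt_tree a b _ h h' := (R.lt_tree _ _ _ h.2.2 h'.2.2).imp (hmono.injOn (hs a h.1) (hs b h'.1))
    (Or.imp (fun hab => ⟨h.1, h'.1, hab⟩) fun hba => ⟨h'.1, h.1, hba⟩)

end TCond

namespace TImage

open TCond

variable {θ θbar : Ordinal} {π : Ordinal → Ordinal} {p q : TCond θbar} {P Q : TCond θ}

theorem forall_mem_iff (hP : TImage π p P) {φ : Ordinal → Prop} :
    (∀ b ∈ P.x, φ b) ↔ ∀ a ∈ p.x, φ (π a) := by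
  refine ⟨fun h a ha => h _ ((hP.1 _).2 ⟨a, ha, rfl⟩), fun h b hb => ?_⟩
  obtain ⟨a, ha, rfl⟩ := (hP.1 b).1 hb
  exact h a ha

theorem mem_iff (hP : TImage π p P) (hinj : InjOn π (Iio θbar)) {a : Ordinal} (ha : a < θbar) :
    π a ∈ P.x ↔ a ∈ p.x := by
  rw [hP.1]
  refine ⟨?_, fun h => ⟨a, h, rfl⟩⟩
  rintro ⟨c, hc, hca⟩
  rwa [← hinj (p.mem_lt c hc) ha hca]

theorem lt_iff (hP : TImage π p P) (hinj : InjOn π (Iio θbar)) {a b : Ordinal}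
    (ha : a < θbar) (hb : b < θbar) : P.lt (π a) (π b) ↔ p.lt a b := by
  rw [hP.2]
  refine ⟨?_, fun h => ⟨a, b, h, rfl, rfl⟩⟩
  rintro ⟨c, c', h, hc, hc'⟩
  obtain ⟨hcx, hc'x⟩ := p.lt_mem c c' h
  rwa [← hinj (p.mem_lt c hcx) ha hc, ← hinj (p.mem_lt c' hc'x) hb hc']

theorem tExt_iff (hP : TImage π p P) (hQ : TImage π q Q) (hinj : InjOn π (Iio θbar)) :
    TExt P Q ↔ TExt p q := by
  simp only [tExt_iff_forall_mem, Finset.subset_iff, hQ.forall_mem_iff]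
  refine and_congr (forall₂_congr fun a ha => hP.mem_iff hinj (q.mem_lt a ha))
    (forall₂_congr fun a ha => forall₂_congr fun b hb => ?_)
  have ha' := q.mem_lt a ha
  have hb' := q.mem_lt b hb
  rw [hQ.lt_iff hinj ha' hb', hP.lt_iff hinj ha' hb']

theorem tExt_comap (hP : TImage π p P) (hmono : StrictMonoOn π (Iio θbar)) {R : TCond θ}
    (hRP : TExt R P) {s : Finset Ordinal} (hs : ∀ a ∈ s, a < θbar) (hps : p.x ⊆ s) :
    TExt (R.comap π hmono s hs) p := by
  rw [tExt_iff_forall_mem] at hRP ⊢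
  refine ⟨hps, fun a ha b hb => ?_⟩
  have hR := hP.forall_mem_iff.1 (fun b hb => hP.forall_mem_iff.1 (hRP.2 b hb)) a ha b hb
  rw [← hP.lt_iff hmono.injOn (p.mem_lt a ha) (p.mem_lt b hb), hR]
  exact ⟨fun h => ⟨hps ha, hps hb, h⟩, fun h => h.2.2⟩

theorem tIncomp_iff (hP : TImage π p P) (hQ : TImage π q Q) (hmono : StrictMonoOn π (Iio θbar))
    (hmaps : ∀ ξ < θbar, π ξ < θ) : TIncomp p q ↔ TIncomp P Q := by
  refine not_congr ⟨?_, ?_⟩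
  · rintro ⟨r, hrp, hrq⟩
    have hR := tImage_map π hmono hmaps r
    exact ⟨r.map π hmono hmaps, (hR.tExt_iff hP hmono.injOn).2 hrp,
      (hR.tExt_iff hQ hmono.injOn).2 hrq⟩
  · rintro ⟨R, hRP, hRQ⟩
    have hs : ∀ a ∈ p.x ∪ q.x, a < θbar := by
      simpa only [Finset.mem_union, or_imp, forall_and] using ⟨p.mem_lt, q.mem_lt⟩
    exact ⟨R.comap π hmono _ hs, hP.tExt_comap hmono hRP hs Finset.subset_union_left,
      hQ.tExt_comap hmono hRQ hs Finset.subset_union_right⟩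

theorem eq_of_tImage (hP : TImage π p P) (hQ : TImage π q P) (hinj : InjOn π (Iio θbar)) :
    p = q :=
  ((hP.tExt_iff hQ hinj).1 (TExt.refl P)).antisymm ((hQ.tExt_iff hP hinj).1 (TExt.refl P))

end TImage

/-- For an order-preserving `π : θ̄ → θ`, the induced map
`P(θ̄) → P(θ)`, `⟨x_p, <_p⟩ ↦ ⟨π[x_p], π[<_p]⟩`, is a well-defined injective
embedding of partial orders: it is order-preserving, and `p, p'` are
incompatible iff their images are incompatible. -/
theorem tennenbaum_induced_embedding {θ θbar : Ordinal} (π : Ordinal → Ordinal)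
    (hmono : StrictMonoOn π (Set.Iio θbar)) (hmaps : ∀ ξ < θbar, π ξ < θ) :
    (∀ p : TCond θbar, ∃ P : TCond θ, TImage π p P) ∧
    (∀ (p q : TCond θbar) (P Q : TCond θ), TImage π p P → TImage π q Q →
      (TExt p q → TExt P Q) ∧ (TIncomp p q ↔ TIncomp P Q) ∧ (P = Q → p = q)) := by
  refine ⟨fun p => ⟨p.map π hmono hmaps, TCond.tImage_map π hmono hmaps p⟩,
    fun p q P Q hP hQ => ⟨(hP.tExt_iff hQ hmono.injOn).2, hP.tIncomp_iff hQ hmono hmaps, ?_⟩⟩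
  rintro rfl
  exact hP.eq_of_tImage hQ hmono.injOn
end
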